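/- arXiv:2211.14221 — 5 statements merged into one kernel-verified Lean document; each statement's English description precedes it below -/
import Mathlib

section
/- Let d ≥ 1, let B be a d×d real matrix with zero diagonal, let ω_1, …, ω_d be nonzero real numbers, let Ω = diag(ω_1², …, ω_d²), and let Θ = (I − B) Ω⁻¹ (I − B)ᵀ. Assume Assumption 1: for all i ≠ j, Θ_{ij} = 0 implies B_{ij} = 0, B_{ji} = 0, and B_{iℓ}·B_{jℓ} = 0 for every ℓ. Then for all i ≠ j, Θ_{ij} ≠ 0 if and only if (i,j) is an edge of the moral graph of B, i.e., B_{ij} ≠ 0, or B_{ji} ≠ 0, or there exists ℓ with B_{iℓ} ≠ 0 and B_{jℓ} ≠ 0. -/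
open Matrix

theorem oicid_stmt_3 (d : ℕ) (hd : 1 ≤ d) (B : Matrix (Fin d) (Fin d) ℝ)
    (hB : ∀ i, B i i = 0) (ω : Fin d → ℝ) (hω : ∀ i, ω i ≠ 0)
    (Θ : Matrix (Fin d) (Fin d) ℝ)
    (hΘ : Θ = (1 - B) * (Matrix.diagonal fun i => (ω i) ^ 2)⁻¹ * (1 - B)ᵀ)
    (hassump : ∀ i j : Fin d, i ≠ j → Θ i j = 0 →
      B i j = 0 ∧ B j i = 0 ∧ ∀ ℓ : Fin d, B i ℓ * B j ℓ = 0) :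
    ∀ i j : Fin d, i ≠ j →
      (Θ i j ≠ 0 ↔ B i j ≠ 0 ∨ B j i ≠ 0 ∨ ∃ ℓ : Fin d, B i ℓ ≠ 0 ∧ B j ℓ ≠ 0) := by
  intro i j hij
  constructor
  · intro hθ
    by_contra h
    push_neg at h
    obtain ⟨h1, h2, h3⟩ := h
    apply hθ
    subst hΘ
    have hinv : (Matrix.diagonal fun i => (ω i) ^ 2)⁻¹
        = Matrix.diagonal (fun i => ((ω i) ^ 2)⁻¹) := by
      rw [eq_comm, Matrix.inv_eq_left_inv]
      rw [Matrix.diagonal_mul_diagonal]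
      convert Matrix.diagonal_one using 2
      funext k
      exact inv_mul_cancel₀ (pow_ne_zero 2 (hω k))
    rw [hinv]
    rw [Matrix.mul_apply]
    apply Finset.sum_eq_zero
    intro ℓ _
    rw [Matrix.mul_diagonal, Matrix.transpose_apply]
    rcases eq_or_ne ℓ i with rfl | hi
    · have : (1 - B) j ℓ = 0 := by
        simp [Matrix.sub_apply, Matrix.one_apply, hij.symm, h2]
      rw [this]; ring
    · rcases eq_or_ne ℓ j with rfl | hj
      · have : (1 - B) i ℓ = 0 := by
          simp [Matrix.sub_apply, Matrix.one_apply, hij, h1]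
        rw [this]; ring
      · have e1 : (1 - B) i ℓ = -B i ℓ := by
          simp [Matrix.sub_apply, Matrix.one_apply, (Ne.symm hi)]
        have e2 : (1 - B) j ℓ = -B j ℓ := by
          simp [Matrix.sub_apply, Matrix.one_apply, (Ne.symm hj)]
        rw [e1, e2]
        have hprod : B i ℓ * B j ℓ = 0 := by
          rcases eq_or_ne (B i ℓ) 0 with h' | h'
          · rw [h']; ring
          · rw [h3 ℓ h']; ring
        linear_combination (ω ℓ ^ 2)⁻¹ * hprod
  · intro h hθ
    obtain ⟨h1, h2, h3⟩ := hassump i j hij hθ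
    rcases h with h | h | ⟨ℓ, ha, hb⟩
    · exact h h1
    · exact h h2
    · exact absurd (h3 ℓ) (mul_ne_zero ha hb)
end

section
/- Let d ≥ 1 and let B⋆ and B be d×d real matrices with zero diagonal, each supported on a DAG. Let Ω⋆ be a diagonal d×d matrix with strictly positive diagonal entries, and set Θ⋆ = (I − B⋆) (Ω⋆)⁻¹ (I − B⋆)ᵀ. If supp(B) ⊆ supp(Θ⋆) and (I − B) (Ω⋆)⁻¹ (I − B)ᵀ = Θ⋆, then B = B⋆. -/
/-! Write `L = 1 - B` and let `Θ_S(B)ᵢⱼ = ∑_{k ∈ S} Lᵢₖ uₖ Lⱼₖ`; we show that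
`Θ_S(B) = Θ_S(C)` on `S × S` forces `B = C` on `S × S`, by induction on `S`. A vertex `i₀ ∈ S` of
minimal `B`-rank has `B i₀ k = 0` on `S`, so `Θ_S(B)ᵢ₀ᵢ₀ = uᵢ₀`. The same entry for `C` is
`uᵢ₀ + ∑_{k ≠ i₀} C i₀ k ^ 2 * uₖ`, so row `i₀` of `C` vanishes on `S` as well. Column `i₀` of
`Θ_S` is then `Lⱼᵢ₀ uᵢ₀` on both sides, so the columns `i₀` agree, and removing the `k = i₀` term
leaves the same identity on `S \ {i₀}`. -/

open Matrix

/-- A matrix is supported on a DAG: some permutation makes it strictly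
lower-triangular (nonzero entries only where `j < i` after reindexing). -/
def SupportedOnDag {d : ℕ} (B : Matrix (Fin d) (Fin d) ℝ) : Prop :=
  ∃ σ : Equiv.Perm (Fin d), ∀ i j : Fin d, B (σ i) (σ j) ≠ 0 → j < i

namespace Matrix

variable {ι α : Type*} [LinearOrder α]

theorem exists_mem_row_eq_zero {B : Matrix ι ι ℝ} {r : ι → α}
    (hr : ∀ i j, B i j ≠ 0 → r j < r i) {S : Finset ι} (hS : S.Nonempty) :
    ∃ i₀ ∈ S, ∀ k ∈ S, B i₀ k = 0 := by
  obtain ⟨i₀, hi₀, hmin⟩ := S.exists_min_image r hS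
  exact ⟨i₀, hi₀, fun k hk => by_contra fun h => (hr i₀ k h).not_ge (hmin k hk)⟩

variable [DecidableEq ι] {B C : Matrix ι ι ℝ} {u : ι → ℝ} {S : Finset ι}

theorem inv_diagonal_of_ne_zero [Fintype ι] {ω : ι → ℝ} (hω : ∀ i, ω i ≠ 0) :
    (diagonal ω)⁻¹ = diagonal ω⁻¹ := by
  apply inv_eq_left_inv
  rw [diagonal_mul_diagonal, ← diagonal_one]
  congr 1
  ext i
  simp [hω i]

theorem mul_diagonal_mul_transpose_apply [Fintype ι] (A B : Matrix ι ι ℝ) (u : ι → ℝ)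
    (i j : ι) : (A * diagonal u * Bᵀ) i j = ∑ k, A i k * u k * B j k := by
  rw [mul_apply]
  simp only [mul_diagonal, transpose_apply]

theorem sum_mul_one_sub_eq_of_row_eq_zero {i₀ : ι} (hi₀ : i₀ ∈ S)
    (hrow : ∀ k ∈ S, B i₀ k = 0) (i : ι) :
    ∑ k ∈ S, (1 - B) i k * u k * (1 - B) i₀ k = (1 - B) i i₀ * u i₀ := by
  rw [Finset.sum_eq_single_of_mem i₀ hi₀ fun k hk hne => by
    simp [one_apply_ne' hne, hrow k hk]]
  simp [hrow i₀ hi₀]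

theorem row_eq_zero_of_sum_mul_one_sub_eq (hu : ∀ i, 0 < u i) {i : ι} (hi : i ∈ S)
    (hdiag : C i i = 0) (h : ∑ k ∈ S, (1 - C) i k * u k * (1 - C) i k = u i) :
    ∀ k ∈ S, C i k = 0 := by
  have hii : (1 - C) i i * u i * (1 - C) i i = u i := by simp [hdiag]
  have hsq : ∀ k ∈ S.erase i, (1 - C) i k * u k * (1 - C) i k = C i k ^ 2 * u k := by
    intro k hk
    rw [sub_apply, one_apply_ne (Finset.ne_of_mem_erase hk).symm]
    ring
  rw [← Finset.add_sum_erase S _ hi, hii, add_eq_left, Finset.sum_congr rfl hsq,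
    Finset.sum_eq_zero_iff_of_nonneg fun k _ => mul_nonneg (sq_nonneg _) (hu k).le] at h
  intro k hk
  rcases eq_or_ne k i with rfl | hne
  · exact hdiag
  · simpa [(hu k).ne'] using h k (Finset.mem_erase.2 ⟨hne, hk⟩)

variable {β : Type*} [LinearOrder β]

theorem eq_on_of_sum_mul_one_sub_eq (hu : ∀ i, 0 < u i) {rB : ι → α} {rC : ι → β}
    (hB : ∀ i j, B i j ≠ 0 → rB j < rB i) (hC : ∀ i j, C i j ≠ 0 → rC j < rC i)
    (S : Finset ι)
    (h : ∀ i ∈ S, ∀ j ∈ S, ∑ k ∈ S, (1 - B) i k * u k * (1 - B) j k =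
      ∑ k ∈ S, (1 - C) i k * u k * (1 - C) j k) :
    ∀ i ∈ S, ∀ j ∈ S, B i j = C i j := by
  induction S using Finset.strongInduction with | H S ih => ?_
  rcases S.eq_empty_or_nonempty with rfl | hS
  · simp
  obtain ⟨i₀, hi₀, hrowB⟩ := exists_mem_row_eq_zero hB hS
  have hdiagC : ∀ i, C i i = 0 := fun i => by_contra fun h => lt_irrefl _ (hC i i h)
  have hrowC : ∀ k ∈ S, C i₀ k = 0 := by
    refine row_eq_zero_of_sum_mul_one_sub_eq hu hi₀ (hdiagC i₀) ?_
    rw [← h i₀ hi₀ i₀ hi₀, sum_mul_one_sub_eq_of_row_eq_zero hi₀ hrowB]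
    simp [hrowB i₀ hi₀]
  have hcol : ∀ j ∈ S, (1 - B) j i₀ = (1 - C) j i₀ := by
    intro j hj
    have := h j hj i₀ hi₀
    rwa [sum_mul_one_sub_eq_of_row_eq_zero hi₀ hrowB,
      sum_mul_one_sub_eq_of_row_eq_zero hi₀ hrowC, mul_left_inj' (hu i₀).ne'] at this
  have hrest := ih (S.erase i₀) (Finset.erase_ssubset hi₀) fun i hi j hj => by
    have := h i (Finset.mem_of_mem_erase hi) j (Finset.mem_of_mem_erase hj)
    rwa [← Finset.add_sum_erase S _ hi₀, ← Finset.add_sum_erase S _ hi₀,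
      hcol i (Finset.mem_of_mem_erase hi), hcol j (Finset.mem_of_mem_erase hj), add_right_inj]
      at this
  intro i hi j hj
  rcases eq_or_ne i i₀ with rfl | hne_i
  · rw [hrowB j hj, hrowC j hj]
  rcases eq_or_ne j i₀ with rfl | hne_j
  · simpa using hcol i hi
  exact hrest i (Finset.mem_erase.2 ⟨hne_i, hi⟩) j (Finset.mem_erase.2 ⟨hne_j, hj⟩)

theorem eq_of_one_sub_mul_diagonal_mul_transpose_eq [Fintype ι] (hu : ∀ i, 0 < u i)
    {rB : ι → α} {rC : ι → β}
    (hB : ∀ i j, B i j ≠ 0 → rB j < rB i) (hC : ∀ i j, C i j ≠ 0 → rC j < rC i)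
    (h : (1 - B) * diagonal u * (1 - B)ᵀ = (1 - C) * diagonal u * (1 - C)ᵀ) :
    B = C := by
  ext i j
  refine eq_on_of_sum_mul_one_sub_eq hu hB hC Finset.univ (fun i _ j _ => ?_) i
    (Finset.mem_univ i) j (Finset.mem_univ j)
  simpa only [mul_diagonal_mul_transpose_apply] using congrFun (congrFun h i) j

end Matrix

theorem SupportedOnDag.exists_rank {d : ℕ} {B : Matrix (Fin d) (Fin d) ℝ}
    (hB : SupportedOnDag B) : ∃ r : Fin d → Fin d, ∀ i j, B i j ≠ 0 → r j < r i := by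
  obtain ⟨σ, hσ⟩ := hB
  exact ⟨σ.symm, fun i j h => hσ _ _ (by simpa using h)⟩

theorem oicid_stmt_5_general (d : ℕ)
    (Bstar B : Matrix (Fin d) (Fin d) ℝ)
    (hBstarDag : SupportedOnDag Bstar) (hBDag : SupportedOnDag B)
    (ω : Fin d → ℝ) (hω : ∀ i, 0 < ω i)
    (Θ : Matrix (Fin d) (Fin d) ℝ)
    (hΘ : Θ = (1 - Bstar) * (Matrix.diagonal ω)⁻¹ * (1 - Bstar)ᵀ)
    (heq : (1 - B) * (Matrix.diagonal ω)⁻¹ * (1 - B)ᵀ = Θ) :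
    B = Bstar := by
  obtain ⟨rB, hrB⟩ := hBDag.exists_rank
  obtain ⟨rBstar, hrBstar⟩ := hBstarDag.exists_rank
  refine eq_of_one_sub_mul_diagonal_mul_transpose_eq (u := ω⁻¹) (fun i => inv_pos.2 (hω i))
    hrB hrBstar ?_
  rw [← inv_diagonal_of_ne_zero fun i => (hω i).ne', heq, hΘ]

theorem oicid_stmt_5 (d : ℕ) (hd : 1 ≤ d)
    (Bstar B : Matrix (Fin d) (Fin d) ℝ)
    (hBstar0 : ∀ i, Bstar i i = 0) (hB0 : ∀ i, B i i = 0)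
    (hBstarDag : SupportedOnDag Bstar) (hBDag : SupportedOnDag B)
    (ω : Fin d → ℝ) (hω : ∀ i, 0 < ω i)
    (Θ : Matrix (Fin d) (Fin d) ℝ)
    (hΘ : Θ = (1 - Bstar) * (Matrix.diagonal ω)⁻¹ * (1 - Bstar)ᵀ)
    (hsupp : ∀ i j : Fin d, B i j ≠ 0 → Θ i j ≠ 0)
    (heq : (1 - B) * (Matrix.diagonal ω)⁻¹ * (1 - B)ᵀ = Θ) :
    B = Bstar :=
  oicid_stmt_5_general d Bstar B hBstarDag hBDag ω hω Θ hΘ heq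
end

section
/- Let d ≥ 1 and let Θ be a d×d real symmetric positive definite matrix such that the identity ordering is a perfect elimination ordering for the support graph of Θ, i.e., for all indices i < j < k, Θ_{ji} ≠ 0 and Θ_{ki} ≠ 0 imply Θ_{kj} ≠ 0. Let L be a unit lower-triangular matrix (L_{ii} = 1 for all i and L_{ij} = 0 for i < j) and let D be a diagonal matrix such that Θ = L D Lᵀ. Then the Cholesky factor has no fill-in: for all i ≠ j, L_{ij} ≠ 0 implies Θ_{ij} ≠ 0. -/
open Matrix

theorem oicid_stmt_8 (d : ℕ) (hd : 1 ≤ d)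
    (Θ : Matrix (Fin d) (Fin d) ℝ) (hPD : Θ.PosDef)
    (hPEO : ∀ i j k : Fin d, i < j → j < k → Θ j i ≠ 0 → Θ k i ≠ 0 → Θ k j ≠ 0)
    (L : Matrix (Fin d) (Fin d) ℝ)
    (hLdiag : ∀ i, L i i = 1) (hLupper : ∀ i j : Fin d, i < j → L i j = 0)
    (δ : Fin d → ℝ)
    (hfac : Θ = L * Matrix.diagonal δ * Lᵀ) :
    ∀ i j : Fin d, i ≠ j → L i j ≠ 0 → Θ i j ≠ 0 := by
  -- each δ k is nonzero, since det Θ ≠ 0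
  have hdetΘ : Θ.det ≠ 0 := ne_of_gt hPD.det_pos
  have hδ : ∀ k, δ k ≠ 0 := by
    intro k hk
    apply hdetΘ
    rw [hfac, det_mul, det_mul, det_diagonal]
    have : ∏ i, δ i = 0 := Finset.prod_eq_zero (Finset.mem_univ k) hk
    rw [this]; ring
  -- entrywise formula
  have hentry : ∀ i j : Fin d, Θ i j = ∑ k, L i k * δ k * L j k := by
    intro i j
    conv_lhs => rw [hfac, Matrix.mul_apply]
    simp [Matrix.mul_diagonal, Matrix.transpose_apply]
  have main : ∀ n, ∀ j i : Fin d, j.val = n → j < i → L i j ≠ 0 → Θ i j ≠ 0 := by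
    intro n
    induction n using Nat.strong_induction_on with
    | _ n IH =>
      intro j i hjn hji hLij
      by_cases hcase : ∀ k : Fin d, k < j → L i k * δ k * L j k = 0
      · -- no earlier interaction: Θ i j = L i j * δ j
        have : Θ i j = L i j * δ j := by
          rw [hentry i j, Finset.sum_eq_single j]
          · rw [hLdiag j]; ring
          · intro k _ hk
            rcases lt_or_gt_of_ne hk with h | h
            · exact hcase k h
            · rw [hLupper j k h]; ring
          · intro h; exact absurd (Finset.mem_univ j) h
        rw [this]
        exact mul_ne_zero hLij (hδ j)
      · push_neg at hcase
        obtain ⟨k, hkj, hterm⟩ := hcase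
        have hLik : L i k ≠ 0 := fun h => hterm (by rw [h]; ring)
        have hLjk : L j k ≠ 0 := fun h => hterm (by rw [h]; ring)
        have hkn : k.val < n := hjn ▸ hkj
        have h1 : Θ j k ≠ 0 := IH k.val hkn k j rfl hkj hLjk
        have h2 : Θ i k ≠ 0 := IH k.val hkn k i rfl (hkj.trans hji) hLik
        exact hPEO k j i hkj hji h1 h2
  intro i j hne hL
  rcases lt_trichotomy i j with h | h | h
  · exact absurd (hLupper i j h) hL
  · exact absurd h hne
  · exact main j.val j i rfl h hL
end

section
/- Let d ≥ 1 and let E be a symmetric relation on {1,…,d} (i.e., (i,j) ∈ E iff (j,i) ∈ E) with no self-loops, satisfying the perfect elimination property: for all indices i < j < k, (j,i) ∈ E and (k,i) ∈ E imply (k,j) ∈ E. Let L be a unit lower-triangular d×d real matrix (L_{ii} = 1, L_{ij} = 0 for i < j) such that for all i > j, L_{ij} ≠ 0 implies (i,j) ∈ E, and let D be a diagonal matrix. Then for all i ≠ j, (L D Lᵀ)_{ij} ≠ 0 implies (i,j) ∈ E. -/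
open Matrix

theorem oicid_stmt_9 (d : ℕ) (hd : 1 ≤ d)
    (E : Fin d → Fin d → Prop)
    (hsym : ∀ i j : Fin d, E i j → E j i) (hirr : ∀ i : Fin d, ¬ E i i)
    (hPEO : ∀ i j k : Fin d, i < j → j < k → E j i → E k i → E k j)
    (L : Matrix (Fin d) (Fin d) ℝ)
    (hLdiag : ∀ i, L i i = 1) (hLupper : ∀ i j : Fin d, i < j → L i j = 0)
    (hLsupp : ∀ i j : Fin d, j < i → L i j ≠ 0 → E i j)
    (δ : Fin d → ℝ) :
    ∀ i j : Fin d, i ≠ j → (L * Matrix.diagonal δ * Lᵀ) i j ≠ 0 → E i j := by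
  intro i j hij hne
  -- find a k with L i k ≠ 0 and L j k ≠ 0
  have hsum : (L * Matrix.diagonal δ * Lᵀ) i j = ∑ k, L i k * δ k * L j k := by
    simp [Matrix.mul_apply, Matrix.diagonal, Finset.sum_mul]
  rw [hsum] at hne
  obtain ⟨k, -, hk⟩ := Finset.exists_ne_zero_of_sum_ne_zero hne
  have hik : L i k ≠ 0 := fun h => hk (by simp [h])
  have hjk : L j k ≠ 0 := fun h => hk (by simp [h])
  have hki : k ≤ i := le_of_not_gt fun h => hik (hLupper i k h)
  have hkj : k ≤ j := le_of_not_gt fun h => hjk (hLupper j k h)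
  rcases hki.lt_or_eq with hki | rfl
  · rcases hkj.lt_or_eq with hkj | rfl
    · have h1 := hLsupp i k hki hik
      have h2 := hLsupp j k hkj hjk
      rcases lt_or_gt_of_ne hij with h | h
      · exact hsym _ _ (hPEO k i j hki h h1 h2)
      · exact hPEO k j i hkj h h2 h1
    · exact hLsupp i k hki hik
  · exact hsym _ _ (hLsupp j k (hkj.lt_of_ne hij) hjk)
end

section
/- Let d ≥ 1 and let Θ be a d×d real symmetric positive definite matrix. Suppose there exists a permutation σ of {1,…,d} such that the permuted matrix Θ' with entries Θ'_{ij} = Θ_{σ(i)σ(j)} has the identity ordering as a perfect elimination ordering, i.e., for all i < j < k, Θ'_{ji} ≠ 0 and Θ'_{ki} ≠ 0 imply Θ'_{kj} ≠ 0 (this holds whenever the support graph of Θ is chordal). Then Θ admits a support-constrained decomposition with a DAG factor: there exist a d×d real matrix B with zero diagonal, supported on a DAG, with supp(B) ⊆ supp(Θ), and a diagonal matrix D with strictly positive diagonal entries, such that Θ = (I − B) D (I − B)ᵀ. -/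
/-!
Symmetric Gaussian elimination in the order given by `σ` writes `Θ' = L D Lᵀ` with `L` unit lower
triangular and `D > 0` (Mathlib's LDL decomposition), and `B = I - L` reindexed back by `σ` is the
required factor. The perfect elimination property rules out fill-in: if `L i j ≠ 0` for `j < i`
while `Θ' i j = 0`, then `Θ' i j = L i j D j + ∑_{k < j} L i k D k L j k` forces `L i k ≠ 0` and
`L j k ≠ 0` for some `k < j`, hence by induction on `j` both `Θ' i k` and `Θ' j k` are nonzero, and
so is `Θ' i j`.
-/

open Matrix

open InnerProductSpace
open scoped ComplexOrder

namespace Matrix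

def IsPerfectEliminationOrder {n R : Type*} [LT n] [Zero R] (M : Matrix n n R) : Prop :=
  ∀ ⦃i j k : n⦄, i < j → j < k → M j i ≠ 0 → M k i ≠ 0 → M k j ≠ 0

section LDL

variable {𝕜 : Type*} [RCLike 𝕜]
variable {n : Type*} [LinearOrder n] [WellFoundedLT n] [LocallyFiniteOrderBot n] [Fintype n]
variable {S : Matrix n n 𝕜} (hS : S.PosDef)

-- The `i`-th Gram–Schmidt vector is `eᵢ` minus a combination of earlier ones, which vanish at `i`.
theorem LDL.lowerInv_diag (i : n) : LDL.lowerInv hS i i = 1 := by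
  let := Sᵀ.toNormedAddCommGroup hS.transpose
  let := Sᵀ.toInnerProductSpace hS.transpose.posSemidef
  have h := congrFun (gramSchmidt_def'' 𝕜 (Pi.basisFun 𝕜 n : n → n → 𝕜) i) i
  simp only [Pi.add_apply, Finset.sum_apply, Pi.smul_apply, smul_eq_mul] at h
  rw [Finset.sum_eq_zero fun j hj => by
    rw [show gramSchmidt 𝕜 (Pi.basisFun 𝕜 n : n → n → 𝕜) j i = 0 from
      LDL.lowerInv_triangular hS (Finset.mem_Iio.1 hj), mul_zero]] at h
  simpa [LDL.lowerInv] using h.symm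

theorem LDL.lower_triangular {i j : n} (hij : i < j) : LDL.lower hS i j = 0 := by
  have h : BlockTriangular (LDL.lowerInv hS) OrderDual.toDual :=
    fun _ _ h => LDL.lowerInv_triangular hS h
  exact blockTriangular_inv_of_blockTriangular h (OrderDual.toDual_lt_toDual.2 hij)

theorem LDL.lower_diag (i : n) : LDL.lower hS i i = 1 := by
  have h : (LDL.lowerInv hS * LDL.lower hS) i i = 1 := by
    rw [LDL.lower, mul_inv_of_invertible, one_apply_eq]
  rw [mul_apply, Finset.sum_eq_single i] at h
  · simpa [LDL.lowerInv_diag] using h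
  · intro k _ hki
    rcases hki.lt_or_gt with hk | hk
    · rw [LDL.lower_triangular hS hk, mul_zero]
    · rw [LDL.lowerInv_triangular hS hk, zero_mul]
  · simp

theorem LDL.diagEntries_pos (i : n) : 0 < LDL.diagEntries hS i := by
  have hne : star (LDL.lowerInv hS i) ≠ 0 := fun h => by
    simpa [LDL.lowerInv_diag] using congrFun (star_eq_zero.1 h) i
  simpa [LDL.diagEntries, EuclideanSpace.inner_toLp_toLp, dotProduct_comm]
    using hS.dotProduct_mulVec_pos hne

end LDL

theorem mul_diagonal_mul_transpose_apply_s10 {n R : Type*} [Fintype n] [DecidableEq n]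
    [CommSemiring R] (L : Matrix n n R) (δ : n → R) (i j : n) :
    (L * diagonal δ * Lᵀ) i j = ∑ k, L i k * δ k * L j k := by
  rw [mul_apply]
  simp only [mul_diagonal, transpose_apply]

theorem IsPerfectEliminationOrder.apply_ne_zero_of_lower_ne_zero {n R : Type*} [Fintype n]
    [LinearOrder n] [DecidableEq n] [CommRing R] [NoZeroDivisors R] {M L : Matrix n n R}
    {δ : n → R} (hM : M.IsPerfectEliminationOrder) (hLM : M = L * diagonal δ * Lᵀ)
    (hL : ∀ ⦃i j⦄, i < j → L i j = 0) (hL₁ : ∀ i, L i i = 1) (hδ : ∀ i, δ i ≠ 0)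
    {i j : n} (hji : j < i) (hLij : L i j ≠ 0) : M i j ≠ 0 := by
  induction j using WellFoundedLT.induction generalizing i with
  | ind j ih =>
  intro hMij
  obtain ⟨k, hk_ne, hk⟩ : ∃ k, k ≠ j ∧ L i k * δ k * L j k ≠ 0 := by
    by_contra! h
    rw [hLM, mul_diagonal_mul_transpose_apply_s10, Finset.sum_eq_single j (fun k _ => h k)
      (by simp), hL₁, mul_one] at hMij
    exact mul_ne_zero hLij (hδ j) hMij
  have hLik : L i k ≠ 0 := left_ne_zero_of_mul (left_ne_zero_of_mul hk)
  have hLjk : L j k ≠ 0 := right_ne_zero_of_mul hk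
  have hkj : k < j := lt_of_le_of_ne (not_lt.1 fun h => hLjk (hL h)) hk_ne
  exact hM hkj hji (ih k hkj hkj hLjk) (ih k hkj (hkj.trans hji) hLik) hMij

theorem exists_ldl_of_isPerfectEliminationOrder {n : Type*} [Fintype n] [LinearOrder n]
    [LocallyFiniteOrderBot n] {S : Matrix n n ℝ} (hS : S.PosDef)
    (hpeo : S.IsPerfectEliminationOrder) :
    ∃ (L : Matrix n n ℝ) (δ : n → ℝ), (∀ ⦃i j⦄, i < j → L i j = 0) ∧ (∀ i, L i i = 1) ∧
      (∀ ⦃i j⦄, j < i → L i j ≠ 0 → S i j ≠ 0) ∧ (∀ i, 0 < δ i) ∧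
      S = L * diagonal δ * Lᵀ := by
  have hS_eq : S = LDL.lower hS * diagonal (LDL.diagEntries hS) * (LDL.lower hS)ᵀ := by
    simpa [conjTranspose_eq_transpose_of_trivial, LDL.diag] using (LDL.lower_conj_diag hS).symm
  refine ⟨LDL.lower hS, LDL.diagEntries hS, fun _ _ => LDL.lower_triangular hS,
    LDL.lower_diag hS, fun _ _ => hpeo.apply_ne_zero_of_lower_ne_zero hS_eq
      (fun _ _ => LDL.lower_triangular hS) (LDL.lower_diag hS)
      (fun i => (LDL.diagEntries_pos hS i).ne'), LDL.diagEntries_pos hS, hS_eq⟩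

theorem submatrix_mul_diagonal_mul_transpose {m n R : Type*} [Fintype m] [Fintype n]
    [DecidableEq m] [DecidableEq n] [CommSemiring R] (L : Matrix n n R) (δ : n → R) (e : m ≃ n) :
    (L * diagonal δ * Lᵀ).submatrix e e =
      L.submatrix e e * diagonal (δ ∘ e) * (L.submatrix e e)ᵀ := by
  rw [← submatrix_diagonal_equiv, transpose_submatrix, submatrix_mul_equiv,
    submatrix_mul_equiv]

end Matrix

theorem oicid_stmt_10_general (d : ℕ)
    (Θ : Matrix (Fin d) (Fin d) ℝ) (hPD : Θ.PosDef)
    (hperm : ∃ σ : Equiv.Perm (Fin d), ∀ i j k : Fin d, i < j → j < k →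
      Θ (σ j) (σ i) ≠ 0 → Θ (σ k) (σ i) ≠ 0 → Θ (σ k) (σ j) ≠ 0) :
    ∃ (B : Matrix (Fin d) (Fin d) ℝ) (δ : Fin d → ℝ),
      (∀ i, B i i = 0) ∧ SupportedOnDag B ∧
      (∀ i j : Fin d, B i j ≠ 0 → Θ i j ≠ 0) ∧
      (∀ i, 0 < δ i) ∧
      Θ = (1 - B) * Matrix.diagonal δ * (1 - B)ᵀ := by
  obtain ⟨σ, hσ⟩ := hperm
  obtain ⟨L, δ, hL, hL₁, hLΘ, hδ, hΘ⟩ :=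
    exists_ldl_of_isPerfectEliminationOrder (hPD.submatrix σ.injective) fun i j k => hσ i j k
  have hB (i j : Fin d) : (1 - L.submatrix σ.symm σ.symm) (σ i) (σ j) ≠ 0 →
      j < i ∧ L i j ≠ 0 := by
    intro h
    have hij : i ≠ j := by rintro rfl; simp [hL₁] at h
    refine ⟨lt_of_le_of_ne (not_lt.1 fun hlt => ?_) hij.symm, by simpa [hij] using h⟩
    simp [hij, hL hlt] at h
  refine ⟨1 - L.submatrix σ.symm σ.symm, δ ∘ σ.symm, fun i => by simp [hL₁],
    ⟨σ, fun i j h => (hB i j h).1⟩, fun i j h => ?_, fun i => hδ _, ?_⟩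
  · obtain ⟨hji, hLij⟩ := hB (σ.symm i) (σ.symm j) (by simpa using h)
    simpa using hLΘ hji hLij
  · rw [sub_sub_cancel, ← submatrix_mul_diagonal_mul_transpose, ← hΘ, submatrix_submatrix]
    simp

theorem oicid_stmt_10 (d : ℕ) (hd : 1 ≤ d)
    (Θ : Matrix (Fin d) (Fin d) ℝ) (hPD : Θ.PosDef)
    (hperm : ∃ σ : Equiv.Perm (Fin d), ∀ i j k : Fin d, i < j → j < k →
      Θ (σ j) (σ i) ≠ 0 → Θ (σ k) (σ i) ≠ 0 → Θ (σ k) (σ j) ≠ 0) :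
    ∃ (B : Matrix (Fin d) (Fin d) ℝ) (δ : Fin d → ℝ),
      (∀ i, B i i = 0) ∧ SupportedOnDag B ∧
      (∀ i j : Fin d, B i j ≠ 0 → Θ i j ≠ 0) ∧
      (∀ i, 0 < δ i) ∧
      Θ = (1 - B) * Matrix.diagonal δ * (1 - B)ᵀ :=
  oicid_stmt_10_general d Θ hPD hperm
end
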